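/- Let M, N be the complex bidiagonal fraction matrices built from distinct |λ_k| < 1, with A = M⁻¹N and B = ρ_1 M⁻¹ e_1. Then (A,B) is controllable: the vectors B, AB, ..., A^{n−1}B span ℂⁿ. -/

import Mathlib

/-!
By the Hautus test, it suffices that no left eigenvector `w` of `A = M⁻¹N` is orthogonal to `B`
(the Krylov space is `A`-invariant by Cayley–Hamilton, and a proper invariant subspace has an
orthogonal left eigenvector). Put `v = w M⁻¹`; then `v (N - μ M) = 0` and `w ⬝ B = ρ₁ v₁`, so
`v₁ = 0`. The pencil `N - μ M` is again lower bidiagonal, with diagonal `λ - μ` and subdiagonal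
entries `(ρ_{j+1} / ρ_j) (1 - μ λ̄_j)`. If `μ` is no `λ_k` the pencil is invertible; otherwise
`|μ| < 1`, so the subdiagonal entries are nonzero and `v₁ = 0` propagates to `v = 0`.
-/

open Matrix

section Krylov

variable {K : Type*} [Field K] {n : ℕ}

theorem pow_mulVec_mem_span_krylov (A : Matrix (Fin n) (Fin n) K) (B : Fin n → K) (k : ℕ) :
    (A ^ k) *ᵥ B ∈ Submodule.span K (Set.range fun i : Fin n => (A ^ (i : ℕ)) *ᵥ B) := by
  obtain rfl | hn := Nat.eq_zero_or_pos n
  · simp [Subsingleton.elim ((A ^ k) *ᵥ B) 0]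
  have hdeg : (Polynomial.X ^ k %ₘ A.charpoly).natDegree < n := by
    simpa [A.charpoly_natDegree_eq_dim] using Polynomial.natDegree_modByMonic_lt _
      A.charpoly_monic fun h => hn.ne (by simpa [h] using A.charpoly_natDegree_eq_dim)
  rw [A.pow_eq_aeval_mod_charpoly k, Polynomial.aeval_eq_sum_range' hdeg, sum_mulVec]
  refine Submodule.sum_mem _ fun i hi => ?_
  rw [smul_mulVec]
  exact Submodule.smul_mem _ _ (Submodule.subset_span ⟨⟨i, Finset.mem_range.mp hi⟩, rfl⟩)

theorem exists_left_eigenvector_orthogonal_of_invariant [IsAlgClosed K] {ι : Type*} [Fintype ι]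
    [DecidableEq ι] (A : Matrix ι ι K) {S : Submodule K (ι → K)} (hS : S ≠ ⊤)
    (hA : ∀ x ∈ S, A *ᵥ x ∈ S) :
    ∃ μ : K, ∃ w : ι → K, w ≠ 0 ∧ w ᵥ* A = μ • w ∧ ∀ x ∈ S, w ⬝ᵥ x = 0 := by
  let W : Submodule K (ι → K) := S.dualAnnihilator.comap (dotProductEquiv K ι).toLinearMap
  have hmemW : ∀ w, w ∈ W ↔ ∀ x ∈ S, w ⬝ᵥ x = 0 := fun w => Submodule.mem_dualAnnihilator _
  have hWinv : ∀ w ∈ W, Aᵀ.mulVecLin w ∈ W := fun w hw => by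
    refine (hmemW _).2 fun x hx => ?_
    rw [mulVecLin_apply, mulVec_transpose, ← dotProduct_mulVec]
    exact (hmemW w).1 hw _ (hA x hx)
  have : Nontrivial W := by
    rw [Submodule.nontrivial_iff_ne_bot]
    simpa [W, Submodule.comap_equiv_eq_map_symm] using hS
  obtain ⟨μ, hμ⟩ := Module.End.exists_eigenvalue (Aᵀ.mulVecLin.restrict hWinv)
  obtain ⟨⟨w, hw⟩, hwμ⟩ := hμ.exists_hasEigenvector
  refine ⟨μ, w, fun h => hwμ.2 (by simp [h]), ?_, (hmemW w).1 hw⟩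
  simpa [LinearMap.restrict_apply, mulVecLin_apply, mulVec_transpose] using
    congrArg Subtype.val hwμ.apply_eq_smul

theorem span_krylov_eq_top_of_forall_left_eigenvector [IsAlgClosed K]
    (A : Matrix (Fin n) (Fin n) K) (B : Fin n → K)
    (h : ∀ (μ : K) (w : Fin n → K), w ≠ 0 → w ᵥ* A = μ • w → w ⬝ᵥ B ≠ 0) :
    Submodule.span K (Set.range fun k : Fin n => (A ^ (k : ℕ)) *ᵥ B) = ⊤ := by
  set S := Submodule.span K (Set.range fun k : Fin n => (A ^ (k : ℕ)) *ᵥ B)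
  by_contra hS
  have hinv : S ≤ S.comap A.mulVecLin := Submodule.span_le.2 <| by
    rintro _ ⟨k, rfl⟩
    simpa [mulVec_mulVec, ← pow_succ'] using pow_mulVec_mem_span_krylov A B (k + 1)
  obtain ⟨μ, w, hw0, hwA, hwS⟩ :=
    exists_left_eigenvector_orthogonal_of_invariant A hS fun x hx => hinv hx
  exact h μ w hw0 hwA (hwS B (by simpa using pow_mulVec_mem_span_krylov A B 0))

end Krylov

section Bidiagonal

variable {K : Type*} [Field K] {n : ℕ}

def lowerBidiagonal (d : Fin n → K) (s : Fin n → Fin n → K) : Matrix (Fin n) (Fin n) K :=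
  of fun i j => if i = j then d i else if (i : ℕ) = (j : ℕ) + 1 then s i j else 0

theorem lowerBidiagonal_isLowerTriangular (d : Fin n → K) (s : Fin n → Fin n → K) :
    (lowerBidiagonal d s).IsLowerTriangular := fun i j hij => by
  have hlt : i < j := hij
  have hsub : (i : ℕ) ≠ j + 1 := by omega
  simp [lowerBidiagonal, hlt.ne, hsub]

theorem det_lowerBidiagonal (d : Fin n → K) (s : Fin n → Fin n → K) :
    (lowerBidiagonal d s).det = ∏ i, d i := by
  rw [det_of_isLowerTriangular _ (lowerBidiagonal_isLowerTriangular d s)]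
  simp [lowerBidiagonal]

theorem vecMul_lowerBidiagonal_castSucc {m : ℕ} (d : Fin (m + 1) → K)
    (s : Fin (m + 1) → Fin (m + 1) → K) (v : Fin (m + 1) → K) (j : Fin m) :
    (v ᵥ* lowerBidiagonal d s) j.castSucc =
      v j.castSucc * d j.castSucc + v j.succ * s j.succ j.castSucc := by
  rw [vecMul, dotProduct, Fintype.sum_eq_add j.castSucc j.succ Fin.castSucc_lt_succ.ne]
  · simp [lowerBidiagonal, Fin.castSucc_lt_succ.ne']
  · rintro i ⟨hi, hi'⟩
    have : (i : ℕ) ≠ j + 1 := fun h => hi' (Fin.ext h)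
    simp [lowerBidiagonal, hi, this]

theorem eq_zero_of_vecMul_lowerBidiagonal_eq_zero {m : ℕ} {d : Fin (m + 1) → K}
    {s : Fin (m + 1) → Fin (m + 1) → K} (hs : ∀ j : Fin m, s j.succ j.castSucc ≠ 0)
    {v : Fin (m + 1) → K} (hv : v ᵥ* lowerBidiagonal d s = 0) (hv0 : v 0 = 0) : v = 0 := by
  funext i
  induction i using Fin.induction with
  | zero => exact hv0
  | succ j ih =>
    have := congrFun hv j.castSucc
    rw [vecMul_lowerBidiagonal_castSucc, ih] at this
    simpa [hs j] using this

theorem lowerBidiagonal_sub_smul (d d' : Fin n → K) (s s' : Fin n → Fin n → K) (μ : K) :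
    lowerBidiagonal d s - μ • lowerBidiagonal d' s' =
      lowerBidiagonal (d - μ • d') (s - μ • s') := by
  ext i j
  by_cases h : i = j <;> by_cases h' : (i : ℕ) = j + 1 <;> simp [lowerBidiagonal, h, h']

end Bidiagonal

open ComplexConjugate

theorem eq_zero_of_vecMul_lowerBidiagonal_eq_smul_vecMul {m : ℕ} {lam : Fin (m + 1) → ℂ}
    (hlam : ∀ k, ‖lam k‖ < 1) {s : Fin (m + 1) → Fin (m + 1) → ℂ}
    (hs : ∀ j : Fin m, s j.succ j.castSucc ≠ 0) {μ : ℂ}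
    {v : Fin (m + 1) → ℂ}
    (hv : v ᵥ* lowerBidiagonal lam s =
      μ • (v ᵥ* lowerBidiagonal 1 fun i j => conj (lam j) * s i j))
    (hv0 : v 0 = 0) : v = 0 := by
  have hv' :
      v ᵥ* lowerBidiagonal (lam - μ • 1) (s - μ • fun i j => conj (lam j) * s i j) = 0 := by
    rw [← lowerBidiagonal_sub_smul, vecMul_sub, vecMul_smul, hv, sub_self]
  by_cases hμ : ∃ k, lam k = μ
  · obtain ⟨k, rfl⟩ := hμ
    refine eq_zero_of_vecMul_lowerBidiagonal_eq_zero (fun j => ?_) hv' hv0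
    have hlt : ‖lam k * conj (lam j.castSucc)‖ < 1 := by
      rw [norm_mul, Complex.norm_conj]
      exact mul_lt_one_of_nonneg_of_lt_one_left (norm_nonneg _) (hlam k) (hlam _).le
    have hne : 1 - lam k * conj (lam j.castSucc) ≠ 0 := sub_ne_zero.2 fun h => by
      rw [← h, norm_one] at hlt
      exact lt_irrefl _ hlt
    convert mul_ne_zero (hs j) hne using 1
    simp only [Pi.sub_apply, Pi.smul_apply, smul_eq_mul]
    ring
  · simp only [not_exists] at hμ
    by_contra hv_ne
    have hdet : ∏ k, (lam - μ • 1) k ≠ 0 :=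
      Finset.prod_ne_zero_iff.2 fun k _ => by simpa [sub_eq_zero] using hμ k
    exact hdet <|
      det_lowerBidiagonal (lam - μ • 1) _ ▸ exists_vecMul_eq_zero_iff.1 ⟨v, hv_ne, hv'⟩

theorem stmt17_general {n : ℕ} (hn : 0 < n) (lam : Fin n → ℂ) (hlam : ∀ k, ‖lam k‖ < 1)
    (ρ : Fin n → ℝ) (hρ : ∀ k, ρ k = Real.sqrt (1 - ‖lam k‖ ^ 2))
    (M N : Matrix (Fin n) (Fin n) ℂ)
    (hM : M = Matrix.of fun i j : Fin n =>
      if i = j then 1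
      else if (i : ℕ) = (j : ℕ) + 1 then
        (starRingEnd ℂ) (lam j) * ((ρ i : ℂ) / (ρ j : ℂ))
      else 0)
    (hN : N = Matrix.of fun i j : Fin n =>
      if i = j then lam i
      else if (i : ℕ) = (j : ℕ) + 1 then ((ρ i : ℂ) / (ρ j : ℂ))
      else 0)
    (B : Fin n → ℂ)
    (hB : B = (ρ ⟨0, hn⟩ : ℂ) • (M⁻¹).mulVec (Pi.single ⟨0, hn⟩ 1)) :
    Submodule.span ℂ
      (Set.range fun k : Fin n => ((M⁻¹ * N) ^ (k : ℕ)).mulVec B) = ⊤ := by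
  obtain ⟨m, rfl⟩ := Nat.exists_eq_add_one_of_ne_zero hn.ne'
  have hρ0 : ∀ k, (ρ k : ℂ) ≠ 0 := fun k => by
    rw [hρ k, Complex.ofReal_ne_zero, Real.sqrt_ne_zero', sub_pos]
    exact pow_lt_one₀ (norm_nonneg _) (hlam k) two_ne_zero
  have hM' : M = lowerBidiagonal 1 fun i j => conj (lam j) * ((ρ i : ℂ) / ρ j) := hM
  have hN' : N = lowerBidiagonal lam fun i j => (ρ i : ℂ) / ρ j := hN
  have hMdet : IsUnit M.det := by simp [hM', det_lowerBidiagonal]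
  refine span_krylov_eq_top_of_forall_left_eigenvector _ _ fun μ w hw0 hwA hwB => hw0 ?_
  set v := w ᵥ* M⁻¹ with hv
  have hvM : v ᵥ* M = w := by rw [hv, vecMul_vecMul, nonsing_inv_mul M hMdet, vecMul_one]
  have hvN : v ᵥ* N = μ • (v ᵥ* M) := by rw [hvM, ← hwA, hv, vecMul_vecMul]
  have hv0 : v 0 = 0 := by
    rw [hB, dotProduct_smul, dotProduct_mulVec, ← hv, dotProduct_single, mul_one,
      smul_eq_mul] at hwB
    exact (mul_eq_zero.1 hwB).resolve_left (hρ0 _)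
  rw [hM', hN'] at hvN
  rw [← hvM, eq_zero_of_vecMul_lowerBidiagonal_eq_smul_vecMul hlam
    (fun j => div_ne_zero (hρ0 _) (hρ0 _)) hvN hv0, zero_vecMul]

/-- The single-input bidiagonal-fraction pair `(A, B) = (M⁻¹N, ρ_1 M⁻¹ e_1)` built from
distinct `|λ_k| < 1` is controllable: `B, AB, …, A^{n−1}B` span `ℂⁿ`. -/
theorem stmt17 {n : ℕ} (hn : 0 < n) (lam : Fin n → ℂ) (hlam : ∀ k, ‖lam k‖ < 1)
    (hdistinct : Function.Injective lam)
    (ρ : Fin n → ℝ) (hρ : ∀ k, ρ k = Real.sqrt (1 - ‖lam k‖ ^ 2))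
    (M N : Matrix (Fin n) (Fin n) ℂ)
    (hM : M = Matrix.of fun i j : Fin n =>
      if i = j then 1
      else if (i : ℕ) = (j : ℕ) + 1 then
        (starRingEnd ℂ) (lam j) * ((ρ i : ℂ) / (ρ j : ℂ))
      else 0)
    (hN : N = Matrix.of fun i j : Fin n =>
      if i = j then lam i
      else if (i : ℕ) = (j : ℕ) + 1 then ((ρ i : ℂ) / (ρ j : ℂ))
      else 0)
    (B : Fin n → ℂ)
    (hB : B = (ρ ⟨0, hn⟩ : ℂ) • (M⁻¹).mulVec (Pi.single ⟨0, hn⟩ 1)) :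
    Submodule.span ℂ
      (Set.range fun k : Fin n => ((M⁻¹ * N) ^ (k : ℕ)).mulVec B) = ⊤ :=
  stmt17_general hn lam hlam ρ hρ M N hM hN B hB
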